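/- arXiv:1512.08588 — 3 statements merged into one kernel-verified Lean document; each statement's English description precedes it below -/
import Mathlib

section
/- If $M$ is a Yetter-Drinfeld-Long bimodule over a finite-dimensional bialgebra $H$, then $M$ equipped with the $H\otimes H^*$-action $(h\otimes f)\cdot m = \langle f, m_{\langle 1\rangle}\rangle\, h\cdot m_{\langle 0\rangle}$ and $H\otimes H^*$-coaction $\rho(m) = \sum_i m_{(-1)}\otimes h^i\otimes m_{(0)}\cdot h_i$ satisfies the left-left Yetter-Drinfeld compatibility over $H\otimes H^*$: $(x_1\cdot m)_{[-1]} x_2 \otimes (x_1\cdot m)_{[0]} = x_1 m_{[-1]}\otimes x_2\cdot m_{[0]}$ for all $x\in H\otimes H^*$, $m\in M$. -/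
/- Common setup: Yetter-Drinfeld-Long bimodules over a bialgebra `H`, and
Yetter-Drinfeld modules over the tensor product bialgebra `H ⊗ H^*`. -/

open TensorProduct LinearMap Module

noncomputable section

namespace YDL

variable (k : Type) [Field k] (H : Type) [Ring H] [Bialgebra k H]
variable (M : Type) [AddCommGroup M] [Module k M]

/-- Data of an `H`-bimodule, `H`-bicomodule structure on `M`:
left action `aL`, right action `aR`, left coaction `cL`, right coaction `cR`. -/
structure LRData where
  aL : H ⊗[k] M →ₗ[k] M
  aR : M ⊗[k] H →ₗ[k] M
  cL : M →ₗ[k] H ⊗[k] M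
  cR : M →ₗ[k] M ⊗[k] H

variable {k H M}

/-- `M` is a left `H`-module. -/
structure IsLMod (D : LRData k H M) : Prop where
  one_act : ∀ m : M, D.aL (1 ⊗ₜ m) = m
  mul_act : ∀ (g h : H) (m : M), D.aL ((g * h) ⊗ₜ m) = D.aL (g ⊗ₜ D.aL (h ⊗ₜ m))

/-- `M` is a right `H`-module. -/
structure IsRMod (D : LRData k H M) : Prop where
  act_one : ∀ m : M, D.aR (m ⊗ₜ 1) = m
  act_mul : ∀ (m : M) (g h : H), D.aR (m ⊗ₜ (g * h)) = D.aR (D.aR (m ⊗ₜ g) ⊗ₜ h)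

/-- `M` is a left `H`-comodule. -/
structure IsLCom (D : LRData k H M) : Prop where
  coassoc : (TensorProduct.assoc k H H M).toLinearMap ∘ₗ map Coalgebra.comul LinearMap.id ∘ₗ D.cL
      = map LinearMap.id D.cL ∘ₗ D.cL
  counit : (TensorProduct.lid k M).toLinearMap ∘ₗ map Coalgebra.counit LinearMap.id ∘ₗ D.cL
      = LinearMap.id

/-- `M` is a right `H`-comodule. -/
structure IsRCom (D : LRData k H M) : Prop where
  coassoc : (TensorProduct.assoc k M H H).toLinearMap ∘ₗ map D.cR LinearMap.id ∘ₗ D.cR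
      = map LinearMap.id Coalgebra.comul ∘ₗ D.cR
  counit : (TensorProduct.rid k M).toLinearMap ∘ₗ map LinearMap.id Coalgebra.counit ∘ₗ D.cR
      = LinearMap.id

/-- Left-left Yetter-Drinfeld condition (1.1):
`(h₁·m)₍₋₁₎h₂ ⊗ (h₁·m)₍₀₎ = h₁m₍₋₁₎ ⊗ h₂·m₍₀₎`, as maps `H ⊗ M → H ⊗ M`. -/
def Cond1 (D : LRData k H M) : Prop :=
  map (LinearMap.mul' k H ∘ₗ (TensorProduct.comm k H H).toLinearMap) LinearMap.id ∘ₗ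
    (TensorProduct.assoc k H H M).symm.toLinearMap ∘ₗ
    map LinearMap.id (D.cL ∘ₗ D.aL) ∘ₗ
    (TensorProduct.assoc k H H M).toLinearMap ∘ₗ
    map ((TensorProduct.comm k H H).toLinearMap ∘ₗ Coalgebra.comul) LinearMap.id
  = map (LinearMap.mul' k H) D.aL ∘ₗ
    (tensorTensorTensorComm k H H H M).toLinearMap ∘ₗ map Coalgebra.comul D.cL

/-- Left-right Long condition (1.2): `(h·m)₍₀₎ ⊗ (h·m)₍₁₎ = h·m₍₀₎ ⊗ m₍₁₎`. -/
def Cond2 (D : LRData k H M) : Prop :=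
  D.cR ∘ₗ D.aL
  = map D.aL LinearMap.id ∘ₗ (TensorProduct.assoc k H M H).symm.toLinearMap ∘ₗ
      map LinearMap.id D.cR

/-- Right-right Yetter-Drinfeld condition (1.3):
`(m·h₂)₍₀₎ ⊗ h₁(m·h₂)₍₁₎ = m₍₀₎·h₁ ⊗ m₍₁₎h₂`, as maps `M ⊗ H → M ⊗ H`. -/
def Cond3 (D : LRData k H M) : Prop :=
  map LinearMap.id (LinearMap.mul' k H ∘ₗ (TensorProduct.comm k H H).toLinearMap) ∘ₗ
    (TensorProduct.assoc k M H H).toLinearMap ∘ₗ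
    map (D.cR ∘ₗ D.aR) LinearMap.id ∘ₗ
    (TensorProduct.assoc k M H H).symm.toLinearMap ∘ₗ
    map LinearMap.id ((TensorProduct.comm k H H).toLinearMap ∘ₗ Coalgebra.comul)
  = map D.aR (LinearMap.mul' k H) ∘ₗ
    (tensorTensorTensorComm k M H H H).toLinearMap ∘ₗ map D.cR Coalgebra.comul

/-- Right-left Long condition (1.4): `(m·h)₍₋₁₎ ⊗ (m·h)₍₀₎ = m₍₋₁₎ ⊗ m₍₀₎·h`. -/
def Cond4 (D : LRData k H M) : Prop :=
  D.cL ∘ₗ D.aR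
  = map LinearMap.id D.aR ∘ₗ (TensorProduct.assoc k H M H).toLinearMap ∘ₗ
      map D.cL LinearMap.id

/-- `M` with the data `D` is a Yetter-Drinfeld-Long bimodule: it is an `H`-bimodule
and an `H`-bicomodule satisfying the four compatibility conditions. -/
structure IsLR (D : LRData k H M) : Prop where
  lmod : IsLMod D
  rmod : IsRMod D
  lcom : IsLCom D
  rcom : IsRCom D
  bimod : ∀ (h h' : H) (m : M), D.aL (h ⊗ₜ D.aR (m ⊗ₜ h')) = D.aR (D.aL (h ⊗ₜ m) ⊗ₜ h')
  bicom : (TensorProduct.assoc k H M H).toLinearMap ∘ₗ map D.cL LinearMap.id ∘ₗ D.cR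
      = map LinearMap.id D.cR ∘ₗ D.cL
  cond1 : Cond1 D
  cond2 : Cond2 D
  cond3 : Cond3 D
  cond4 : Cond4 D

variable (k H M)

/-- The tensor product bialgebra `H ⊗ H^*` (as a vector space). -/
abbrev X := H ⊗[k] Module.Dual k H

/-- Convolution product on `H^*`: `⟨f*g, h⟩ = ⟨f,h₁⟩⟨g,h₂⟩`. -/
def convL : Module.Dual k H ⊗[k] Module.Dual k H →ₗ[k] Module.Dual k H :=
  (Coalgebra.comul (R := k) (A := H)).dualMap ∘ₗ TensorProduct.dualDistrib k H H

/-- Counit of `H^*`: evaluation at `1`. -/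
def εD : Module.Dual k H →ₗ[k] k := LinearMap.applyₗ (1 : H)

/-- Multiplication of the tensor product bialgebra `H ⊗ H^*`. -/
def μX : X k H ⊗[k] X k H →ₗ[k] X k H :=
  map (LinearMap.mul' k H) (convL k H) ∘ₗ
    (tensorTensorTensorComm k H (Module.Dual k H) H (Module.Dual k H)).toLinearMap

/-- Unit of `H ⊗ H^*`. -/
def oneX : X k H := 1 ⊗ₜ (Coalgebra.counit : Module.Dual k H)

/-- Counit of `H ⊗ H^*`. -/
def εX : X k H →ₗ[k] k := LinearMap.mul' k k ∘ₗ map Coalgebra.counit (εD k H)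

variable [FiniteDimensional k H]

/-- Comultiplication of `H^*` (for finite dimensional `H`): dual of multiplication. -/
def ΔD : Module.Dual k H →ₗ[k] Module.Dual k H ⊗[k] Module.Dual k H :=
  (TensorProduct.dualDistribEquiv k H H).symm.toLinearMap ∘ₗ (LinearMap.mul' k H).dualMap

/-- Comultiplication of the tensor product bialgebra `H ⊗ H^*`. -/
def ΔX : X k H →ₗ[k] X k H ⊗[k] X k H :=
  (tensorTensorTensorComm k H H (Module.Dual k H) (Module.Dual k H)).toLinearMap ∘ₗ
    map Coalgebra.comul (ΔD k H)

/-- The canonical element `∑ hᵢ ⊗ hⁱ ∈ H ⊗ H^*` (dual bases). -/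
def canel : H ⊗[k] Module.Dual k H := coevaluation k H 1

end YDL

end
namespace YDL

noncomputable section
open TensorProduct LinearMap Module

variable (k : Type) [Field k] (H : Type) [Ring H] [Bialgebra k H]
variable (M N P : Type) [AddCommGroup M] [Module k M] [AddCommGroup N] [Module k N]
  [AddCommGroup P] [Module k P]

/-- Data of a module-comodule structure on `M` over `H ⊗ H^*`. -/
structure YDData where
  act : X k H ⊗[k] M →ₗ[k] M
  coact : M →ₗ[k] X k H ⊗[k] M

variable {k H M N P}

/-- `M` is a left `H ⊗ H^*`-module (stated on pure tensors, which span `H ⊗ H^*`). -/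
structure IsXMod (E : YDData k H M) : Prop where
  one_act : ∀ m : M, E.act (oneX k H ⊗ₜ m) = m
  mul_act : ∀ (h h' : H) (f f' : Module.Dual k H) (m : M),
    E.act (((h * h') ⊗ₜ convL k H (f ⊗ₜ f')) ⊗ₜ m)
      = E.act ((h ⊗ₜ f) ⊗ₜ E.act ((h' ⊗ₜ f') ⊗ₜ m))

variable [FiniteDimensional k H]

/-- `M` is a left `H ⊗ H^*`-comodule. -/
structure IsXCom (E : YDData k H M) : Prop where
  coassoc : (TensorProduct.assoc k (X k H) (X k H) M).toLinearMap ∘ₗ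
      map (ΔX k H) LinearMap.id ∘ₗ E.coact = map LinearMap.id E.coact ∘ₗ E.coact
  counit : (TensorProduct.lid k M).toLinearMap ∘ₗ map (εX k H) LinearMap.id ∘ₗ E.coact
      = LinearMap.id

/-- The left-left Yetter-Drinfeld compatibility over `H ⊗ H^*`:
`(x₁·m)₍₋₁₎x₂ ⊗ (x₁·m)₍₀₎ = x₁m₍₋₁₎ ⊗ x₂·m₍₀₎`, as maps `(H ⊗ H^*) ⊗ M → (H ⊗ H^*) ⊗ M`. -/
def CondYD (E : YDData k H M) : Prop :=
  map (μX k H ∘ₗ (TensorProduct.comm k (X k H) (X k H)).toLinearMap) LinearMap.id ∘ₗ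
    (TensorProduct.assoc k (X k H) (X k H) M).symm.toLinearMap ∘ₗ
    map LinearMap.id (E.coact ∘ₗ E.act) ∘ₗ
    (TensorProduct.assoc k (X k H) (X k H) M).toLinearMap ∘ₗ
    map ((TensorProduct.comm k (X k H) (X k H)).toLinearMap ∘ₗ ΔX k H) LinearMap.id
  = map (μX k H) E.act ∘ₗ
    (tensorTensorTensorComm k (X k H) (X k H) (X k H) M).toLinearMap ∘ₗ map (ΔX k H) E.coact

/-- `M` is a left-left Yetter-Drinfeld module over `H ⊗ H^*`. -/
structure IsYD (E : YDData k H M) : Prop where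
  xmod : IsXMod E
  xcom : IsXCom E
  yd : CondYD E

/-! ### The functor `F : 𝓛𝓡(H) → ᴴ⊗ᴴ*YD` -/

/-- `f ⊗ m ↦ ⟨f, m₍₁₎⟩ m₍₀₎`, built from a right coaction `cR`. -/
def evR (cR : M →ₗ[k] M ⊗[k] H) : Module.Dual k H ⊗[k] M →ₗ[k] M :=
  (TensorProduct.lid k M).toLinearMap ∘ₗ map (contractLeft k H) LinearMap.id ∘ₗ
    (TensorProduct.assoc k (Module.Dual k H) H M).symm.toLinearMap ∘ₗ
    map LinearMap.id ((TensorProduct.comm k M H).toLinearMap ∘ₗ cR)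

/-- The `H ⊗ H^*`-action `(h ⊗ f) · m = ⟨f, m₍₁₎⟩ h · m₍₀₎` (formula (2.1)). -/
def Fact (D : LRData k H M) : X k H ⊗[k] M →ₗ[k] M :=
  D.aL ∘ₗ map LinearMap.id (evR D.cR) ∘ₗ
    (TensorProduct.assoc k H (Module.Dual k H) M).toLinearMap

/-- `m ↦ ∑ hⁱ ⊗ m · hᵢ`, built from a right action `aR`. -/
def insD (aR : M ⊗[k] H →ₗ[k] M) : M →ₗ[k] Module.Dual k H ⊗[k] M :=
  map LinearMap.id (aR ∘ₗ (TensorProduct.comm k H M).toLinearMap) ∘ₗ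
    (TensorProduct.assoc k (Module.Dual k H) H M).toLinearMap ∘ₗ
    TensorProduct.mk k (Module.Dual k H ⊗[k] H) M
      ((TensorProduct.comm k H (Module.Dual k H)) (canel k H))

/-- The `H ⊗ H^*`-coaction `ρ(m) = ∑ m₍₋₁₎ ⊗ hⁱ ⊗ m₍₀₎ · hᵢ` (formula (2.2)). -/
def Fco (D : LRData k H M) : M →ₗ[k] X k H ⊗[k] M :=
  (TensorProduct.assoc k H (Module.Dual k H) M).symm.toLinearMap ∘ₗ
    map LinearMap.id (insD D.aR) ∘ₗ D.cL

/-- The functor `F` on objects. -/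
def Fdata (D : LRData k H M) : YDData k H M := ⟨Fact D, Fco D⟩

/-! ### The functor `G : ᴴ⊗ᴴ*YD → 𝓛𝓡(H)` -/

variable (k H)

/-- `h ↦ h ⊗ ε`. -/
def ιH : H →ₗ[k] X k H :=
  (TensorProduct.mk k H (Module.Dual k H)).flip (Coalgebra.counit : Module.Dual k H)

/-- `f ↦ 1 ⊗ f`. -/
def ιD : Module.Dual k H →ₗ[k] X k H := TensorProduct.mk k H (Module.Dual k H) 1

/-- `h ⊗ f ↦ ε*(f) h`. -/
def πH : X k H →ₗ[k] H := (TensorProduct.rid k H).toLinearMap ∘ₗ map LinearMap.id (εD k H)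

/-- `(h ⊗ f) ⊗ h' ↦ ε(h)⟨f, h'⟩`. -/
def ξX : X k H ⊗[k] H →ₗ[k] k :=
  LinearMap.mul' k k ∘ₗ map Coalgebra.counit (contractLeft k H) ∘ₗ
    (TensorProduct.assoc k H (Module.Dual k H) H).toLinearMap

variable {k H}

/-- The restricted left `H`-action `h · m = (h ⊗ ε) · m`. -/
def gL (A : X k H ⊗[k] M →ₗ[k] M) : H ⊗[k] M →ₗ[k] M := A ∘ₗ map (ιH k H) LinearMap.id

/-- The right `H`-action `m · h = ⟨(ε ⊗ id) m₍₋₁₎, h⟩ m₍₀₎`. -/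
def gR (C : M →ₗ[k] X k H ⊗[k] M) : M ⊗[k] H →ₗ[k] M :=
  (TensorProduct.lid k M).toLinearMap ∘ₗ map (ξX k H) LinearMap.id ∘ₗ
    (TensorProduct.assoc k (X k H) H M).symm.toLinearMap ∘ₗ
    map LinearMap.id (TensorProduct.comm k M H).toLinearMap ∘ₗ
    (TensorProduct.assoc k (X k H) M H).toLinearMap ∘ₗ map C LinearMap.id

/-- The left `H`-coaction `ρ_L(m) = (id ⊗ ε*)(m₍₋₁₎) ⊗ m₍₀₎`. -/
def gcL (C : M →ₗ[k] X k H ⊗[k] M) : M →ₗ[k] H ⊗[k] M := map (πH k H) LinearMap.id ∘ₗ C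

/-- The right `H`-coaction `ρ_R(m) = ∑ (1 ⊗ hⁱ) · m ⊗ hᵢ`. -/
def gcR (A : X k H ⊗[k] M →ₗ[k] M) : M →ₗ[k] M ⊗[k] H :=
  map (A ∘ₗ map (ιD k H) LinearMap.id) LinearMap.id ∘ₗ
    (TensorProduct.assoc k (Module.Dual k H) M H).symm.toLinearMap ∘ₗ
    map LinearMap.id (TensorProduct.comm k H M).toLinearMap ∘ₗ
    (TensorProduct.assoc k (Module.Dual k H) H M).toLinearMap ∘ₗ
    map (TensorProduct.comm k H (Module.Dual k H)).toLinearMap LinearMap.id ∘ₗ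
    TensorProduct.mk k (H ⊗[k] Module.Dual k H) M (canel k H)

/-- The functor `G` on objects. -/
def Gdata (E : YDData k H M) : LRData k H M :=
  ⟨gL E.act, gR E.coact, gcL E.coact, gcR E.act⟩

end

end YDL
namespace YDL

noncomputable section
open TensorProduct LinearMap Module

variable {k : Type} [Field k] {H : Type} [Ring H] [Bialgebra k H]
variable {M N P : Type} [AddCommGroup M] [Module k M] [AddCommGroup N] [Module k N]
  [AddCommGroup P] [Module k P]

/-- The tensor product of two Yetter-Drinfeld-Long bimodule structures, with diagonal
actions and codiagonal coactions. -/
def tensorLR (D : LRData k H M) (D' : LRData k H N) : LRData k H (M ⊗[k] N) where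
  aL := map D.aL D'.aL ∘ₗ (tensorTensorTensorComm k H H M N).toLinearMap ∘ₗ
    map Coalgebra.comul LinearMap.id
  aR := map D.aR D'.aR ∘ₗ (tensorTensorTensorComm k M N H H).toLinearMap ∘ₗ
    map LinearMap.id Coalgebra.comul
  cL := map (LinearMap.mul' k H) LinearMap.id ∘ₗ
    (tensorTensorTensorComm k H M H N).toLinearMap ∘ₗ map D.cL D'.cL
  cR := map LinearMap.id (LinearMap.mul' k H) ∘ₗ
    (tensorTensorTensorComm k M H N H).toLinearMap ∘ₗ map D.cR D'.cR

variable [FiniteDimensional k H]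

/-- The tensor product of two Yetter-Drinfeld module structures over `H ⊗ H^*`. -/
def tensorYD (E : YDData k H M) (E' : YDData k H N) : YDData k H (M ⊗[k] N) where
  act := map E.act E'.act ∘ₗ (tensorTensorTensorComm k (X k H) (X k H) M N).toLinearMap ∘ₗ
    map (ΔX k H) LinearMap.id
  coact := map (μX k H) LinearMap.id ∘ₗ
    (tensorTensorTensorComm k (X k H) M (X k H) N).toLinearMap ∘ₗ map E.coact E'.coact

/-- A linear map `φ : M → N` is a morphism of Yetter-Drinfeld-Long bimodules
(`H`-bilinear and `H`-bicolinear). -/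
def LRHom (D : LRData k H M) (D' : LRData k H N) (φ : M →ₗ[k] N) : Prop :=
  φ ∘ₗ D.aL = D'.aL ∘ₗ map LinearMap.id φ ∧
  φ ∘ₗ D.aR = D'.aR ∘ₗ map φ LinearMap.id ∧
  D'.cL ∘ₗ φ = map LinearMap.id φ ∘ₗ D.cL ∧
  D'.cR ∘ₗ φ = map φ LinearMap.id ∘ₗ D.cR

/-- A linear map `φ : M → N` is a morphism of Yetter-Drinfeld modules over `H ⊗ H^*`
(`H ⊗ H^*`-linear and colinear). -/
def YDHom (E : YDData k H M) (E' : YDData k H N) (φ : M →ₗ[k] N) : Prop :=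
  φ ∘ₗ E.act = E'.act ∘ₗ map LinearMap.id φ ∧
  E'.coact ∘ₗ φ = map LinearMap.id φ ∘ₗ E.coact

/-- The braiding of `𝓛𝓡(H)`: `m ⊗ n ↦ m₍₋₁₎·n₍₀₎ ⊗ m₍₀₎·n₍₁₎`. -/
def cLR (D : LRData k H M) (D' : LRData k H N) : M ⊗[k] N →ₗ[k] N ⊗[k] M :=
  map D'.aL D.aR ∘ₗ (tensorTensorTensorComm k H M N H).toLinearMap ∘ₗ map D.cL D'.cR

/-- The inverse braiding of `𝓛𝓡(H)` (`T` is the inverse of the antipode):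
`n ⊗ m ↦ m₍₀₎·S⁻¹(n₍₁₎) ⊗ S⁻¹(m₍₋₁₎)·n₍₀₎`. -/
def cLRinv (D : LRData k H M) (D' : LRData k H N) (T : H →ₗ[k] H) :
    N ⊗[k] M →ₗ[k] M ⊗[k] N :=
  map D.aR D'.aL ∘ₗ
    (TensorProduct.comm k (H ⊗[k] N) (M ⊗[k] H)).toLinearMap ∘ₗ
    (tensorTensorTensorComm k H M N H).toLinearMap ∘ₗ
    (TensorProduct.comm k (N ⊗[k] H) (H ⊗[k] M)).toLinearMap ∘ₗ
    map (map LinearMap.id T) (map T LinearMap.id) ∘ₗ map D'.cR D.cL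

/-- The braiding of the Yetter-Drinfeld category over `H ⊗ H^*`:
`m ⊗ n ↦ m₍₋₁₎·n ⊗ m₍₀₎`, built from the coaction on `M` and the action on `N`. -/
def cYD (C : M →ₗ[k] X k H ⊗[k] M) (A' : X k H ⊗[k] N →ₗ[k] N) : M ⊗[k] N →ₗ[k] N ⊗[k] M :=
  map A' LinearMap.id ∘ₗ (TensorProduct.assoc k (X k H) N M).symm.toLinearMap ∘ₗ
    map LinearMap.id (TensorProduct.comm k M N).toLinearMap ∘ₗ
    (TensorProduct.assoc k (X k H) M N).toLinearMap ∘ₗ map C LinearMap.id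

end

end YDL
namespace YDL
open TensorProduct LinearMap Module

/-!
The action and coaction over `H ⊗ H^*` are assembled from two Yetter-Drinfeld structures: the
`H`-action and `H`-coaction `(h · m, m₍₋₁₎ ⊗ m₍₀₎)`, Yetter-Drinfeld by (1), and the `H^*`-action
`f ⇀ m = ⟨f, m₍₁₎⟩ m₍₀₎` with the `H^*`-coaction `m ↦ ∑ hⁱ ⊗ m · hᵢ`, Yetter-Drinfeld by (3).
The bimodule and bicomodule axioms say that the `H`-action commutes with the `H^*`-coaction and
the `H`-coaction with the `H^*`-action, which is all the Yetter-Drinfeld condition over a tensor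
product bialgebra needs. To compare the two sides we evaluate their `H^*` factor at every `c ∈ H`,
which determines an element because `H` is finite-dimensional; the dual bases then collapse and
the `H^*`-coaction turns into the right action of `c`.
-/

section TensorLemmas

variable {R : Type*} [CommSemiring R] {A B C D P Q : Type*} [AddCommMonoid A] [Module R A]
  [AddCommMonoid B] [Module R B] [AddCommMonoid C] [Module R C] [AddCommMonoid D] [Module R D]
  [AddCommMonoid P] [Module R P] [AddCommMonoid Q] [Module R Q]

lemma LinearMap.comp_finsetSum {ι : Type*} (s : Finset ι) (g : B →ₗ[R] C) (φ : ι → A →ₗ[R] B) :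
    g ∘ₗ ∑ j ∈ s, φ j = ∑ j ∈ s, g ∘ₗ φ j :=
  map_sum (LinearMap.llcomp R A B C g) φ s

lemma TensorProduct.map_finsetSum_right {ι : Type*} (s : Finset ι) (f : A →ₗ[R] B)
    (g : ι → C →ₗ[R] P) : map f (∑ j ∈ s, g j) = ∑ j ∈ s, map f (g j) :=
  map_sum (mapBilinear (RingHom.id R) A C B P f) g s

lemma map_comm_assoc_symm_tmul (μ : B ⊗[R] A →ₗ[R] C) (f : P →ₗ[R] Q) (a : A) (t : B ⊗[R] P) :
    map (μ ∘ₗ (TensorProduct.comm R A B).toLinearMap) f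
        ((TensorProduct.assoc R A B P).symm (a ⊗ₜ t))
      = map (μ ∘ₗ (TensorProduct.mk R B A).flip a) f t := by
  induction t using TensorProduct.induction_on with
  | zero => simp
  | tmul b p => simp
  | add x y hx hy => simp_all [tmul_add]

lemma map_comm_assoc_tmul (f : P →ₗ[R] Q) (μ : B ⊗[R] A →ₗ[R] C) (t : P ⊗[R] A) (b : B) :
    map f (μ ∘ₗ (TensorProduct.comm R A B).toLinearMap) (TensorProduct.assoc R P A B (t ⊗ₜ b))
      = map f (μ ∘ₗ TensorProduct.mk R B A b) t := by
  induction t using TensorProduct.induction_on with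
  | zero => simp
  | tmul p a => simp
  | add x y hx hy => simp_all [add_tmul]

lemma map_tensorTensorTensorComm_tmul_left (μ : A ⊗[R] C →ₗ[R] P) (F : B ⊗[R] D →ₗ[R] Q)
    (a : A) (b : B) (t : C ⊗[R] D) :
    map μ F (tensorTensorTensorComm R A B C D ((a ⊗ₜ b) ⊗ₜ t))
      = map (μ ∘ₗ TensorProduct.mk R A C a) (F ∘ₗ TensorProduct.mk R B D b) t := by
  induction t using TensorProduct.induction_on with
  | zero => simp
  | tmul c d => simp
  | add x y hx hy => simp_all [tmul_add]

lemma map_tensorTensorTensorComm_tmul_right (F : A ⊗[R] C →ₗ[R] P) (μ : B ⊗[R] D →ₗ[R] Q)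
    (t : A ⊗[R] B) (c : C) (d : D) :
    map F μ (tensorTensorTensorComm R A B C D (t ⊗ₜ (c ⊗ₜ d)))
      = map (F ∘ₗ (TensorProduct.mk R A C).flip c) (μ ∘ₗ (TensorProduct.mk R B D).flip d) t := by
  induction t using TensorProduct.induction_on with
  | zero => simp
  | tmul a b => simp
  | add x y hx hy => simp_all [add_tmul]

lemma rid_map_apply (F : A →ₗ[R] P) (g : B →ₗ[R] R) (t : A ⊗[R] B) :
    TensorProduct.rid R P (map F g t) = F (TensorProduct.rid R A (map LinearMap.id g t)) := by
  induction t using TensorProduct.induction_on with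
  | zero => simp
  | tmul a b => simp
  | add x y hx hy => simp_all

end TensorLemmas

section YetterDrinfeldLong

variable {k : Type} [Field k] {H : Type} [Ring H] [Bialgebra k H]
  {M : Type} [AddCommGroup M] [Module k M] {V : Type} [AddCommGroup V] [Module k V]
  {ι κ : Type*}

lemma Basis.sum_coord_smul_apply {τ N W : Type*} [Fintype τ] [AddCommGroup N] [Module k N]
    [AddCommGroup W] [Module k W] (b : Basis τ k N) (F : N →ₗ[k] W) (d : N) :
    ∑ t, b.coord t d • F (b t) = F d := by
  simp_rw [← map_smul, ← map_sum, Basis.coord_apply, Basis.sum_repr]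

def evalDualAt (c : H) (V : Type) [AddCommGroup V] [Module k V] :
    X k H ⊗[k] V →ₗ[k] H ⊗[k] V :=
  map ((TensorProduct.rid k H).toLinearMap ∘ₗ lTensor H (applyₗ c)) LinearMap.id

@[simp]
lemma evalDualAt_tmul (c a : H) (g : Module.Dual k H) (v : V) :
    evalDualAt c V ((a ⊗ₜ g) ⊗ₜ v) = g c • (a ⊗ₜ v) := by
  simp [evalDualAt, smul_tmul']

lemma dualTensorHom_assoc_comm_apply (x : X k H ⊗[k] V) (c : H) :
    dualTensorHom k H (H ⊗[k] V)
        (TensorProduct.assoc k _ H V (map (TensorProduct.comm k H _).toLinearMap LinearMap.id x)) c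
      = evalDualAt c V x := by
  induction x using TensorProduct.induction_on with
  | zero => simp
  | tmul y v =>
    induction y using TensorProduct.induction_on with
    | zero => simp
    | tmul a g => simp [smul_tmul']
    | add y y' hy hy' => simp_all [add_tmul]
  | add x x' hx hx' => simp_all

lemma convL_tmul_apply (g g' : Module.Dual k H) {c : H} (rc : Coalgebra.Repr k c ι) :
    convL k H (g ⊗ₜ g') c = ∑ j ∈ rc.index, g (rc.left j) * g' (rc.right j) := by
  simp [convL, ← rc.eq, map_sum]

@[simp]
lemma μX_tmul (a a' : H) (g g' : Module.Dual k H) :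
    μX k H ((a ⊗ₜ g) ⊗ₜ (a' ⊗ₜ g')) = (a * a') ⊗ₜ convL k H (g ⊗ₜ g') := by
  simp [μX]

lemma evR_tmul (cR : M →ₗ[k] M ⊗[k] H) (g : Module.Dual k H) (u : M) :
    evR cR (g ⊗ₜ u) = TensorProduct.rid k M (map LinearMap.id g (cR u)) := by
  simp only [evR, LinearMap.coe_comp, LinearEquiv.coe_coe, Function.comp_apply, map_tmul,
    LinearMap.id_coe, id_eq]
  induction cR u using TensorProduct.induction_on with
  | zero => simp
  | tmul v a => simp
  | add x y hx hy => simp_all [tmul_add]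

lemma Fact_tmul (D : LRData k H M) (a : H) (g : Module.Dual k H) (m : M) :
    Fact D ((a ⊗ₜ g) ⊗ₜ m) = D.aL (a ⊗ₜ evR D.cR (g ⊗ₜ m)) := by
  simp [Fact]

lemma Fact_comp_mk (D : LRData k H M) (a : H) (g : Module.Dual k H) :
    Fact D ∘ₗ TensorProduct.mk k (X k H) M (a ⊗ₜ g)
      = D.aL ∘ₗ TensorProduct.mk k H M a ∘ₗ evR D.cR ∘ₗ TensorProduct.mk k _ M g := by
  ext m
  simp [Fact_tmul]

@[simp]
lemma mul'_comp_mk (a : H) : LinearMap.mul' k H ∘ₗ TensorProduct.mk k H H a = mulLeft k a := by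
  ext; simp

@[simp]
lemma mul'_comp_mk_flip (a : H) :
    LinearMap.mul' k H ∘ₗ (TensorProduct.mk k H H).flip a = mulRight k a := by
  ext; simp

lemma Cond1.sum_map_mulRight_cL_aL {D : LRData k H M} (h1 : Cond1 D) {h : H}
    (rh : Coalgebra.Repr k h ι) (ψ : M →ₗ[k] V) (u : M) :
    ∑ i ∈ rh.index, map (mulRight k (rh.right i)) ψ (D.cL (D.aL (rh.left i ⊗ₜ u)))
      = ∑ i ∈ rh.index, map (mulLeft k (rh.left i))
          (ψ ∘ₗ D.aL ∘ₗ TensorProduct.mk k H M (rh.right i)) (D.cL u) := by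
  have e := congrArg (map LinearMap.id ψ) (LinearMap.congr_fun h1 (h ⊗ₜ u))
  simp only [LinearMap.coe_comp, LinearEquiv.coe_coe, Function.comp_apply, map_tmul,
    LinearMap.id_coe, id_eq, ← rh.eq, map_sum, sum_tmul, comm_tmul, assoc_tmul,
    map_comm_assoc_symm_tmul, map_tensorTensorTensorComm_tmul_left, map_map] at e
  simpa only [LinearMap.id_comp, LinearMap.comp_id, ← LinearMap.comp_assoc, mul'_comp_mk,
    mul'_comp_mk_flip] using e

lemma IsLR.aR_comp_aL {D : LRData k H M} (hD : IsLR D) (a c : H) :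
    D.aR ∘ₗ (TensorProduct.mk k M H).flip c ∘ₗ D.aL ∘ₗ TensorProduct.mk k H M a
      = D.aL ∘ₗ TensorProduct.mk k H M a ∘ₗ D.aR ∘ₗ (TensorProduct.mk k M H).flip c := by
  ext u
  simp [hD.bimod]

lemma IsLR.cL_evR {D : LRData k H M} (hD : IsLR D) (g : Module.Dual k H) (m : M) :
    D.cL (evR D.cR (g ⊗ₜ m))
      = map LinearMap.id (evR D.cR ∘ₗ TensorProduct.mk k _ M g) (D.cL m) := by
  have hnat : ∀ t : M ⊗[k] H, D.cL (TensorProduct.rid k M (map LinearMap.id g t))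
      = map LinearMap.id ((TensorProduct.rid k M).toLinearMap ∘ₗ map LinearMap.id g)
          (TensorProduct.assoc k H M H (map D.cL LinearMap.id t)) := by
    intro t
    induction t using TensorProduct.induction_on with
    | zero => simp
    | tmul v a =>
      simp only [map_tmul, LinearMap.id_coe, id_eq, rid_tmul, map_smul]
      induction D.cL v using TensorProduct.induction_on with
      | zero => simp
      | tmul b w => simp
      | add x y hx hy => simp_all [add_tmul]
    | add x y hx hy => simp_all
  have hbicom := LinearMap.congr_fun hD.bicom m
  simp only [LinearMap.coe_comp, LinearEquiv.coe_coe, Function.comp_apply] at hbicom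
  rw [evR_tmul, hnat, hbicom, map_map]
  congr 2
  ext u
  simp [evR_tmul]

lemma IsLR.sum_map_cL_aL_evR {D : LRData k H M} (hD : IsLR D) {h : H}
    (rh : Coalgebra.Repr k h ι) (g : Module.Dual k H) (c : H) (m : M) :
    ∑ i ∈ rh.index, map (mulRight k (rh.right i)) (D.aR ∘ₗ (TensorProduct.mk k M H).flip c)
        (D.cL (D.aL (rh.left i ⊗ₜ evR D.cR (g ⊗ₜ m))))
      = ∑ i ∈ rh.index, map (mulLeft k (rh.left i))
          (D.aL ∘ₗ TensorProduct.mk k H M (rh.right i) ∘ₗ D.aR ∘ₗ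
            (TensorProduct.mk k M H).flip c ∘ₗ evR D.cR ∘ₗ TensorProduct.mk k _ M g) (D.cL m) := by
  rw [hD.cond1.sum_map_mulRight_cL_aL, hD.cL_evR]
  refine Finset.sum_congr rfl fun i _ => ?_
  rw [LinearMap.comp_assoc, hD.aR_comp_aL, map_map]
  simp only [LinearMap.comp_id, LinearMap.comp_assoc]

/-- With `f ⇀ m = ⟨f, m₍₁₎⟩ m₍₀₎`, the two sides of the Yetter-Drinfeld condition over `H^*` for
`⇀` and `m ↦ ∑ hⁱ ⊗ m · hᵢ`, with their `H^*` factor evaluated at `c`, are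
`m ↦ ∑ f₂(c₂) (f₁ ⇀ m) · c₁` (this map) and `m ↦ ∑ f₁(c₁) f₂ ⇀ (m · c₂)` (`dualYDRight`). -/
def dualYDLeft (D : LRData k H M) (f : Module.Dual k H) {c : H} (rc : Coalgebra.Repr k c ι) :
    M →ₗ[k] M :=
  ∑ j ∈ rc.index, D.aR ∘ₗ (TensorProduct.mk k M H).flip (rc.left j) ∘ₗ evR D.cR ∘ₗ
    TensorProduct.mk k _ M (f ∘ₗ mulRight k (rc.right j))

def dualYDRight (D : LRData k H M) (f : Module.Dual k H) {c : H} (rc : Coalgebra.Repr k c ι) :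
    M →ₗ[k] M :=
  ∑ j ∈ rc.index, evR D.cR ∘ₗ TensorProduct.mk k _ M (f ∘ₗ mulLeft k (rc.left j)) ∘ₗ D.aR ∘ₗ
    (TensorProduct.mk k M H).flip (rc.right j)

lemma Cond3.dualYDLeft_eq_dualYDRight {D : LRData k H M} (h3 : Cond3 D) (f : Module.Dual k H)
    {c : H} (rc : Coalgebra.Repr k c ι) : dualYDLeft D f rc = dualYDRight D f rc := by
  ext u
  have e := congrArg (fun t => TensorProduct.rid k M (map LinearMap.id f t))
    (LinearMap.congr_fun h3 (u ⊗ₜ c))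
  simp only [LinearMap.coe_comp, LinearEquiv.coe_coe, Function.comp_apply, map_tmul,
    LinearMap.id_coe, id_eq, ← rc.eq, map_sum, tmul_sum, assoc_symm_tmul, comm_tmul,
    map_comm_assoc_tmul, map_tensorTensorTensorComm_tmul_right, map_map, LinearMap.id_comp,
    ← LinearMap.comp_assoc, mul'_comp_mk, mul'_comp_mk_flip, rid_map_apply (D.aR ∘ₗ _)] at e
  simp only [dualYDLeft, dualYDRight, LinearMap.coe_sum, Finset.sum_apply, LinearMap.coe_comp,
    Function.comp_apply, LinearMap.flip_apply, mk_apply, evR_tmul]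
  exact e.symm

variable [FiniteDimensional k H]

lemma ext_of_evalDualAt {x y : X k H ⊗[k] V} (h : ∀ c : H, evalDualAt c V x = evalDualAt c V y) :
    x = y := by
  let e := TensorProduct.congr (TensorProduct.comm k H (Module.Dual k H)) (LinearEquiv.refl k V) ≪≫ₗ
    TensorProduct.assoc k _ H V
  refine e.injective ((dualTensorHom_bijective (R := k) (M := H) (N := H ⊗[k] V)).injective ?_)
  ext c
  exact (dualTensorHom_assoc_comm_apply x c).trans
    ((h c).trans (dualTensorHom_assoc_comm_apply y c).symm)

lemma insD_apply (aR : M ⊗[k] H →ₗ[k] M) (u : M) :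
    insD aR u = ∑ t, (Basis.ofVectorSpace k H).coord t ⊗ₜ aR (u ⊗ₜ Basis.ofVectorSpace k H t) := by
  simp [insD, canel, coevaluation_apply_one, map_sum]

lemma evalDualAt_mulLeft_Fco (D : LRData k H M) {c : H} (rc : Coalgebra.Repr k c ι) (a : H)
    (g : Module.Dual k H) (φ : M →ₗ[k] V) (n : M) :
    evalDualAt c V (map (μX k H ∘ₗ TensorProduct.mk k _ _ (a ⊗ₜ g)) φ (Fco D n))
      = ∑ j ∈ rc.index, g (rc.left j) • map (mulLeft k a)
          (φ ∘ₗ D.aR ∘ₗ (TensorProduct.mk k M H).flip (rc.right j)) (D.cL n) := by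
  simp only [Fco, LinearMap.coe_comp, LinearEquiv.coe_coe, Function.comp_apply]
  induction D.cL n using TensorProduct.induction_on with
  | zero => simp
  | tmul w u =>
    simp only [map_tmul, LinearMap.id_coe, id_eq, insD_apply, tmul_sum, map_sum,
      assoc_symm_tmul, LinearMap.coe_comp, Function.comp_apply, mk_apply, μX_tmul,
      evalDualAt_tmul, convL_tmul_apply _ _ rc, Finset.sum_smul, mul_smul]
    rw [Finset.sum_comm]
    refine Finset.sum_congr rfl fun j _ => ?_
    rw [← Finset.smul_sum]
    congr 1
    exact Basis.sum_coord_smul_apply _ ((TensorProduct.mk k H V (a * w)) ∘ₗ φ ∘ₗ D.aR ∘ₗ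
      TensorProduct.mk k M H u) _
  | add x y hx hy => simp_all [Finset.sum_add_distrib]

lemma evalDualAt_mulRight_Fco (D : LRData k H M) {c : H} (rc : Coalgebra.Repr k c ι) (a : H)
    (g : Module.Dual k H) (φ : M →ₗ[k] V) (n : M) :
    evalDualAt c V (map (μX k H ∘ₗ (TensorProduct.mk k _ _).flip (a ⊗ₜ g)) φ (Fco D n))
      = ∑ j ∈ rc.index, g (rc.right j) • map (mulRight k a)
          (φ ∘ₗ D.aR ∘ₗ (TensorProduct.mk k M H).flip (rc.left j)) (D.cL n) := by
  simp only [Fco, LinearMap.coe_comp, LinearEquiv.coe_coe, Function.comp_apply]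
  induction D.cL n using TensorProduct.induction_on with
  | zero => simp
  | tmul w u =>
    simp only [map_tmul, LinearMap.id_coe, id_eq, insD_apply, tmul_sum, map_sum,
      assoc_symm_tmul, LinearMap.coe_comp, Function.comp_apply, LinearMap.flip_apply, mk_apply,
      μX_tmul, evalDualAt_tmul, convL_tmul_apply _ _ rc, Finset.sum_smul, mul_comm _ (g _),
      mul_smul]
    rw [Finset.sum_comm]
    refine Finset.sum_congr rfl fun j _ => ?_
    rw [← Finset.smul_sum]
    congr 1
    exact Basis.sum_coord_smul_apply _ ((TensorProduct.mk k H V (w * a)) ∘ₗ φ ∘ₗ D.aR ∘ₗ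
      TensorProduct.mk k M H u) _
  | add x y hx hy => simp_all [Finset.sum_add_distrib]

variable {f : Module.Dual k H} {Q : Finset (Module.Dual k H × Module.Dual k H)}

lemma sum_apply_mul_apply_of_ΔD (hQ : ΔD k H f = ∑ q ∈ Q, q.1 ⊗ₜ q.2) (a b : H) :
    ∑ q ∈ Q, q.1 a * q.2 b = f (a * b) := by
  have h : TensorProduct.dualDistrib k H H (ΔD k H f) = (LinearMap.mul' k H).dualMap f :=
    (TensorProduct.dualDistribEquiv k H H).apply_symm_apply _
  simpa [hQ] using LinearMap.congr_fun h (a ⊗ₜ b)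

lemma sum_smul_fst_of_ΔD (hQ : ΔD k H f = ∑ q ∈ Q, q.1 ⊗ₜ q.2) (b : H) :
    ∑ q ∈ Q, q.2 b • q.1 = f ∘ₗ mulRight k b := by
  ext a
  simp [← sum_apply_mul_apply_of_ΔD hQ, mul_comm]

lemma sum_smul_snd_of_ΔD (hQ : ΔD k H f = ∑ q ∈ Q, q.1 ⊗ₜ q.2) (a : H) :
    ∑ q ∈ Q, q.1 a • q.2 = f ∘ₗ mulLeft k a := by
  ext b
  simp [← sum_apply_mul_apply_of_ΔD hQ]

lemma ΔX_tmul {h : H} (rh : Coalgebra.Repr k h ι) (hQ : ΔD k H f = ∑ q ∈ Q, q.1 ⊗ₜ q.2) :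
    ΔX k H (h ⊗ₜ f) = ∑ i ∈ rh.index, ∑ q ∈ Q, (rh.left i ⊗ₜ q.1) ⊗ₜ (rh.right i ⊗ₜ q.2) := by
  simp only [ΔX, LinearMap.coe_comp, LinearEquiv.coe_coe, Function.comp_apply, map_tmul, ← rh.eq,
    hQ, tmul_sum, sum_tmul, map_sum, tensorTensorTensorComm_tmul]
  exact Finset.sum_comm

lemma dualYDLeft_eq_sum (D : LRData k H M) (hQ : ΔD k H f = ∑ q ∈ Q, q.1 ⊗ₜ q.2) {c : H}
    (rc : Coalgebra.Repr k c κ) :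
    dualYDLeft D f rc = ∑ q ∈ Q, ∑ j ∈ rc.index, q.2 (rc.right j) •
      (D.aR ∘ₗ (TensorProduct.mk k M H).flip (rc.left j) ∘ₗ evR D.cR ∘ₗ
        TensorProduct.mk k _ M q.1) := by
  ext u
  simp only [dualYDLeft, ← sum_smul_fst_of_ΔD hQ, map_sum, map_smul, LinearMap.comp_finsetSum,
    LinearMap.comp_smul, LinearMap.coe_sum, Finset.sum_apply, LinearMap.smul_apply]
  exact Finset.sum_comm

lemma dualYDRight_eq_sum (D : LRData k H M) (hQ : ΔD k H f = ∑ q ∈ Q, q.1 ⊗ₜ q.2) {c : H}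
    (rc : Coalgebra.Repr k c κ) :
    dualYDRight D f rc = ∑ q ∈ Q, ∑ j ∈ rc.index, q.1 (rc.left j) •
      (evR D.cR ∘ₗ TensorProduct.mk k _ M q.2 ∘ₗ D.aR ∘ₗ
        (TensorProduct.mk k M H).flip (rc.right j)) := by
  ext u
  simp only [dualYDRight, ← sum_smul_snd_of_ΔD hQ, LinearMap.coe_sum, Finset.sum_apply,
    LinearMap.smul_apply, LinearMap.coe_comp, Function.comp_apply, mk_apply, map_sum, map_smul]
  exact Finset.sum_comm

noncomputable def ydLeft (E : YDData k H M) : X k H ⊗[k] M →ₗ[k] X k H ⊗[k] M :=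
  map (μX k H ∘ₗ (TensorProduct.comm k (X k H) (X k H)).toLinearMap) LinearMap.id ∘ₗ
    (TensorProduct.assoc k (X k H) (X k H) M).symm.toLinearMap ∘ₗ
    map LinearMap.id (E.coact ∘ₗ E.act) ∘ₗ
    (TensorProduct.assoc k (X k H) (X k H) M).toLinearMap ∘ₗ
    map ((TensorProduct.comm k (X k H) (X k H)).toLinearMap ∘ₗ ΔX k H) LinearMap.id

noncomputable def ydRight (E : YDData k H M) : X k H ⊗[k] M →ₗ[k] X k H ⊗[k] M :=
  map (μX k H) E.act ∘ₗ
    (tensorTensorTensorComm k (X k H) (X k H) (X k H) M).toLinearMap ∘ₗ map (ΔX k H) E.coact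

lemma condYD_iff (E : YDData k H M) : CondYD E ↔ ydLeft E = ydRight E := Iff.rfl

lemma evalDualAt_ydLeft_Fdata {D : LRData k H M} (hD : IsLR D) {h : H}
    (rh : Coalgebra.Repr k h ι) (hQ : ΔD k H f = ∑ q ∈ Q, q.1 ⊗ₜ q.2) {c : H}
    (rc : Coalgebra.Repr k c κ) (m : M) :
    evalDualAt c M (ydLeft (Fdata D) ((h ⊗ₜ f) ⊗ₜ m))
      = ∑ i ∈ rh.index, map (mulLeft k (rh.left i))
          (D.aL ∘ₗ TensorProduct.mk k H M (rh.right i) ∘ₗ dualYDLeft D f rc) (D.cL m) := by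
  rw [dualYDLeft_eq_sum D hQ]
  simp only [ydLeft, Fdata, LinearMap.coe_comp, LinearEquiv.coe_coe, Function.comp_apply,
    map_tmul, ΔX_tmul rh hQ, map_sum, sum_tmul, comm_tmul, assoc_tmul, LinearMap.id_coe, id_eq,
    map_comm_assoc_symm_tmul, evalDualAt_mulRight_Fco D rc, Fact_tmul, LinearMap.id_comp,
    LinearMap.comp_finsetSum, LinearMap.comp_smul, TensorProduct.map_finsetSum_right,
    TensorProduct.map_smul_right, LinearMap.coe_sum, Finset.sum_apply, LinearMap.smul_apply]
  rw [Finset.sum_comm]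
  conv_rhs => rw [Finset.sum_comm]
  refine Finset.sum_congr rfl fun q _ => ?_
  rw [Finset.sum_comm]
  conv_rhs => rw [Finset.sum_comm]
  refine Finset.sum_congr rfl fun j _ => ?_
  rw [← Finset.smul_sum, ← Finset.smul_sum, hD.sum_map_cL_aL_evR]

lemma evalDualAt_ydRight_Fdata (D : LRData k H M) {h : H} (rh : Coalgebra.Repr k h ι)
    (hQ : ΔD k H f = ∑ q ∈ Q, q.1 ⊗ₜ q.2) {c : H} (rc : Coalgebra.Repr k c κ) (m : M) :
    evalDualAt c M (ydRight (Fdata D) ((h ⊗ₜ f) ⊗ₜ m))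
      = ∑ i ∈ rh.index, map (mulLeft k (rh.left i))
          (D.aL ∘ₗ TensorProduct.mk k H M (rh.right i) ∘ₗ dualYDRight D f rc) (D.cL m) := by
  rw [dualYDRight_eq_sum D hQ]
  simp only [ydRight, Fdata, LinearMap.coe_comp, LinearEquiv.coe_coe, Function.comp_apply,
    map_tmul, ΔX_tmul rh hQ, map_sum, sum_tmul, map_tensorTensorTensorComm_tmul_left,
    evalDualAt_mulLeft_Fco D rc, Fact_comp_mk, LinearMap.comp_finsetSum, LinearMap.comp_smul,
    TensorProduct.map_finsetSum_right, TensorProduct.map_smul_right, LinearMap.coe_sum,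
    Finset.sum_apply, LinearMap.smul_apply, LinearMap.comp_assoc]

end YetterDrinfeldLong

/-- for a Yetter-Drinfeld-Long bimodule `M`, the induced action and
coaction satisfy the left-left Yetter-Drinfeld compatibility over `H ⊗ H^*`. -/
theorem statement2 {k : Type} [Field k] {H : Type} [Ring H] [Bialgebra k H]
    [FiniteDimensional k H] {M : Type} [AddCommGroup M] [Module k M]
    (D : LRData k H M) (hD : IsLR D) :
    CondYD (Fdata D) := by
  rw [condYD_iff]
  refine TensorProduct.ext_threefold fun h f m => ext_of_evalDualAt fun c => ?_
  obtain ⟨Q, hQ⟩ := TensorProduct.exists_finset (R := k) (ΔD k H f)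
  let rh := Coalgebra.Repr.arbitrary k h
  let rc := Coalgebra.Repr.arbitrary k c
  rw [evalDualAt_ydLeft_Fdata hD rh hQ rc, evalDualAt_ydRight_Fdata D rh hQ rc,
    hD.cond3.dualYDLeft_eq_dualYDRight]

end YDL
end

section
/- Let $M$ be a left-left Yetter-Drinfeld module over the tensor product bialgebra $H\otimes H^*$. Then the restricted actions $h\cdot m := (h\otimes\varepsilon)\cdot m$ and $m\cdot h := \langle(\varepsilon\otimes \mathrm{id})m_{[-1]}, h\rangle\, m_{[0]}$ make $M$ an $H$-bimodule, i.e. $(h\cdot m)\cdot h' = h\cdot(m\cdot h')$ for all $h,h'\in H$, $m\in M$. -/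
/- Common setup: Yetter-Drinfeld-Long bimodules over a bialgebra `H`, and
Yetter-Drinfeld modules over the tensor product bialgebra `H ⊗ H^*`. -/

open TensorProduct LinearMap Module

/-! Write `⟨x, h⟩ = pairAt k H h x := ε(a) f(h)` for `x = a ⊗ f ∈ H ⊗ H^*`, so that
`m · h = ⟨m₍₋₁₎, h⟩ m₍₀₎`. Since the coproduct of `H^*` is dual to the product of `H`,
`⟨x₁, g⟩⟨x₂, h⟩ = ⟨x, gh⟩` and `⟨x, 1⟩ = ε(x)`; hence the right module laws are the comodule laws
of `M`, while the left ones are the module laws restricted along `h ↦ h ⊗ ε`. For the bimodule law,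
pair the first factor of the Yetter-Drinfeld condition at `x = h ⊗ ε`, whose coproduct is
`(h₁ ⊗ ε) ⊗ (h₂ ⊗ ε)`, with `h'`: as `⟨y (b ⊗ ε), h'⟩ = ⟨y, h'⟩ ε(b) = ⟨(b ⊗ ε) y, h'⟩`, the two
sides become `(h · m) · h'` and `h · (m · h')`. -/

namespace Coalgebra

variable {R A ι : Type*} [CommSemiring R] [AddCommMonoid A] [Module R A] [Coalgebra R A]

lemma sum_counit_right_smul {a : A} (𝓡 : Repr R a ι) :
    ∑ i ∈ 𝓡.index, counit (R := R) (𝓡.right i) • 𝓡.left i = a := by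
  simpa only [map_sum, _root_.TensorProduct.rid_tmul, one_smul] using
    congr(_root_.TensorProduct.rid R A $(sum_tmul_counit_eq 𝓡))

lemma mul'_map_counit_comul (a : A) :
    LinearMap.mul' R R (_root_.TensorProduct.map counit counit (comul a)) = counit (R := R) a := by
  simp only [← (ℛ R a).eq, map_sum, _root_.TensorProduct.map_tmul, sum_counit_tmul_map_eq,
    LinearMap.mul'_apply, one_mul]

end Coalgebra

namespace YDL

open TensorProduct LinearMap Module

section

open scoped Coalgebra

variable {k : Type} [Field k] {H : Type} [Ring H] [Bialgebra k H]
variable {M N : Type} [AddCommGroup M] [Module k M] [AddCommGroup N] [Module k N]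

variable (k H) in
noncomputable def pairAt (h : H) : X k H →ₗ[k] k := (TensorProduct.curry (ξX k H)).flip h

noncomputable def contractAt (h : H) : X k H ⊗[k] M →ₗ[k] M :=
  (TensorProduct.lid k M).toLinearMap ∘ₗ map (pairAt k H h) LinearMap.id

@[simp]
lemma pairAt_tmul (h a : H) (f : Module.Dual k H) :
    pairAt k H h (a ⊗ₜ f) = Coalgebra.counit a * f h := by
  simp [pairAt, ξX, LinearMap.mul'_apply]

@[simp]
lemma contractAt_tmul (h : H) (x : X k H) (m : M) :
    contractAt h (x ⊗ₜ m) = pairAt k H h x • m := by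
  simp [contractAt]

lemma gL_tmul (A : X k H ⊗[k] M →ₗ[k] M) (h : H) (m : M) :
    gL A (h ⊗ₜ m) = A (ιH k H h ⊗ₜ m) :=
  rfl

lemma gR_tmul (C : M →ₗ[k] X k H ⊗[k] M) (m : M) (h : H) :
    gR C (m ⊗ₜ h) = contractAt h (C m) := by
  simp only [gR, coe_comp, LinearEquiv.coe_coe, Function.comp_apply, map_tmul, id_coe, id_eq]
  induction C m using TensorProduct.induction_on with
  | zero => simp
  | tmul x n => simp [pairAt]
  | add c c' hc hc' => simp [add_tmul, hc, hc']

lemma contractAt_naturality (h : H) (L : M →ₗ[k] N) (c : X k H ⊗[k] M) :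
    L (contractAt h c) = contractAt h (map LinearMap.id L c) := by
  induction c using TensorProduct.induction_on with
  | zero => simp
  | tmul x m => simp
  | add c c' hc hc' => simp [hc, hc']

lemma convL_counit_right (f : Module.Dual k H) : convL k H (f ⊗ₜ Coalgebra.counit) = f := by
  ext h
  simpa [convL, ← (ℛ k h).eq, map_sum, dualDistrib_apply, mul_comm] using
    congr(f $(Coalgebra.sum_counit_right_smul (ℛ k h)))

lemma convL_counit_left (f : Module.Dual k H) : convL k H (Coalgebra.counit ⊗ₜ f) = f := by
  ext h
  simpa [convL, ← (ℛ k h).eq, map_sum, dualDistrib_apply] using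
    congr(f $(Coalgebra.sum_counit_smul (ℛ k h)))

lemma pairAt_one : pairAt k H 1 = εX k H := by
  refine TensorProduct.ext' fun a f => ?_
  simp [εX, εD, LinearMap.mul'_apply]

lemma pairAt_μX_ιH_right (h b : H) (y : X k H) :
    pairAt k H h (μX k H (y ⊗ₜ ιH k H b)) = pairAt k H h y * Coalgebra.counit b := by
  induction y using TensorProduct.induction_on with
  | zero => simp
  | tmul a f =>
    simp only [μX, ιH, flip_apply, mk_apply, coe_comp, LinearEquiv.coe_coe, Function.comp_apply,
      tensorTensorTensorComm_tmul, map_tmul, mul'_apply, convL_counit_right, pairAt_tmul,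
      Bialgebra.counit_mul]
    ring
  | add y y' hy hy' => simp [add_tmul, hy, hy', add_mul]

lemma pairAt_μX_ιH_left (h b : H) (y : X k H) :
    pairAt k H h (μX k H (ιH k H b ⊗ₜ y)) = Coalgebra.counit b * pairAt k H h y := by
  induction y using TensorProduct.induction_on with
  | zero => simp
  | tmul a f =>
    simp only [μX, ιH, flip_apply, mk_apply, coe_comp, LinearEquiv.coe_coe, Function.comp_apply,
      tensorTensorTensorComm_tmul, map_tmul, mul'_apply, convL_counit_left, pairAt_tmul,
      Bialgebra.counit_mul]
    ring
  | add y y' hy hy' => simp [tmul_add, hy, hy', mul_add]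

lemma contractAt_μX_comm_ιH (h b : H) (c : X k H ⊗[k] M) :
    contractAt h (map (μX k H ∘ₗ (TensorProduct.comm k (X k H) (X k H)).toLinearMap)
        LinearMap.id ((TensorProduct.assoc k (X k H) (X k H) M).symm (ιH k H b ⊗ₜ c)))
      = Coalgebra.counit (R := k) b • contractAt h c := by
  induction c using TensorProduct.induction_on with
  | zero => simp
  | tmul y m => simp [pairAt_μX_ιH_right, mul_comm, mul_smul]
  | add c c' hc hc' => simp_all [tmul_add]

lemma contractAt_μX_ιH (A : X k H ⊗[k] M →ₗ[k] M) (h b : H) (x : X k H) (c : X k H ⊗[k] M) :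
    contractAt h (map (μX k H) A
        (tensorTensorTensorComm k (X k H) (X k H) (X k H) M ((ιH k H b ⊗ₜ x) ⊗ₜ c)))
      = Coalgebra.counit (R := k) b • A (x ⊗ₜ contractAt h c) := by
  induction c using TensorProduct.induction_on with
  | zero => simp
  | tmul y m => simp [pairAt_μX_ιH_left, mul_smul]
  | add c c' hc hc' => simp_all [tmul_add]

variable [FiniteDimensional k H]

variable (k H) in
lemma ΔD_counit : ΔD k H Coalgebra.counit = Coalgebra.counit ⊗ₜ Coalgebra.counit := by
  rw [ΔD, LinearMap.comp_apply, LinearEquiv.coe_coe, LinearEquiv.symm_apply_eq]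
  ext a b
  simp [LinearMap.mul'_apply]

lemma dualDistrib_ΔD (f : Module.Dual k H) (g h : H) :
    dualDistrib k H H (ΔD k H f) (g ⊗ₜ h) = f (g * h) := by
  change dualDistribEquiv k H H ((dualDistribEquiv k H H).symm _) _ = _
  rw [LinearEquiv.apply_symm_apply]
  simp [LinearMap.mul'_apply]

lemma pairAt_mul (g h : H) :
    LinearMap.mul' k k ∘ₗ map (pairAt k H g) (pairAt k H h) ∘ₗ ΔX k H = pairAt k H (g * h) := by
  have key : LinearMap.mul' k k ∘ₗ map (pairAt k H g) (pairAt k H h) ∘ₗ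
      (tensorTensorTensorComm k H H (Module.Dual k H) (Module.Dual k H)).toLinearMap =
      LinearMap.mul' k k ∘ₗ map (LinearMap.mul' k k ∘ₗ map Coalgebra.counit Coalgebra.counit)
        (LinearMap.applyₗ (g ⊗ₜ h) ∘ₗ dualDistrib k H H) := by
    refine TensorProduct.ext_fourfold' fun a b f f' => ?_
    simp only [coe_comp, LinearEquiv.coe_coe, Function.comp_apply, tensorTensorTensorComm_tmul,
      map_tmul, pairAt_tmul, mul'_apply, applyₗ_apply_apply, dualDistrib_apply]
    ring
  refine TensorProduct.ext' fun a f => ?_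
  have := LinearMap.congr_fun key (Coalgebra.comul a ⊗ₜ ΔD k H f)
  simp only [coe_comp, LinearEquiv.coe_coe, Function.comp_apply] at this
  simp [ΔX, this, dualDistrib_ΔD, Coalgebra.mul'_map_counit_comul]

lemma contractAt_comp_contractAt (g h : H) :
    contractAt (M := M) g ∘ₗ map LinearMap.id (contractAt h) ∘ₗ
      (TensorProduct.assoc k (X k H) (X k H) M).toLinearMap ∘ₗ map (ΔX k H) LinearMap.id
      = contractAt (g * h) := by
  have hcontract : contractAt (M := M) g ∘ₗ map LinearMap.id (contractAt h) ∘ₗ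
      (TensorProduct.assoc k (X k H) (X k H) M).toLinearMap
      = (TensorProduct.lid k M).toLinearMap ∘ₗ
          LinearMap.rTensor M (LinearMap.mul' k k ∘ₗ map (pairAt k H g) (pairAt k H h)) :=
    TensorProduct.ext_threefold fun x y m => by
      simp [LinearMap.mul'_apply, mul_smul, smul_comm (pairAt k H h y)]
  calc _ = (contractAt (M := M) g ∘ₗ map LinearMap.id (contractAt h) ∘ₗ
        (TensorProduct.assoc k (X k H) (X k H) M).toLinearMap) ∘ₗ LinearMap.rTensor M (ΔX k H) :=
        rfl
    _ = contractAt (g * h) := by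
        rw [hcontract, LinearMap.comp_assoc, ← LinearMap.rTensor_comp, LinearMap.comp_assoc,
          pairAt_mul]
        rfl

lemma ΔX_ιH (h : H) :
    ΔX k H (ιH k H h) = map (ιH k H) (ιH k H) (Coalgebra.comul h) := by
  simp [ΔX, ιH, ΔD_counit, ← (ℛ k h).eq, map_sum, sum_tmul]

variable {E : YDData k H M}

lemma isLMod_gdata (hmod : IsXMod E) : IsLMod (Gdata E) where
  one_act m := by
    simpa [Gdata, gL_tmul, ιH, oneX] using hmod.one_act m
  mul_act g h m := by
    simpa [Gdata, gL_tmul, ιH, convL_counit_right] using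
      hmod.mul_act g h Coalgebra.counit Coalgebra.counit m

lemma isRMod_gdata (hcom : IsXCom E) : IsRMod (Gdata E) where
  act_one m := by
    simpa [Gdata, gR_tmul, contractAt, pairAt_one] using LinearMap.congr_fun hcom.counit m
  act_mul m g h := by
    have hco := LinearMap.congr_fun hcom.coassoc m
    simp only [coe_comp, LinearEquiv.coe_coe, Function.comp_apply] at hco
    simp only [Gdata, gR_tmul, ← contractAt_comp_contractAt g h, coe_comp, LinearEquiv.coe_coe,
      Function.comp_apply, hco]
    rw [← LinearMap.comp_apply (map LinearMap.id (contractAt h)), ← map_comp, LinearMap.id_comp]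
    exact (contractAt_naturality g (contractAt h ∘ₗ E.coact) (E.coact m)).symm

lemma gdata_aL_aR_comm (hyd : CondYD E) (h h' : H) (m : M) :
    (Gdata E).aL (h ⊗ₜ (Gdata E).aR (m ⊗ₜ h')) = (Gdata E).aR ((Gdata E).aL (h ⊗ₜ m) ⊗ₜ h') := by
  simp only [Gdata, gL_tmul, gR_tmul]
  have hyd' := congr(contractAt h' $(LinearMap.congr_fun hyd (ιH k H h ⊗ₜ m)))
  simp only [coe_comp, LinearEquiv.coe_coe, Function.comp_apply, map_tmul, id_coe, id_eq,
    ΔX_ιH, ← (ℛ k h).eq, map_sum, sum_tmul, TensorProduct.comm_tmul, TensorProduct.assoc_tmul,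
    contractAt_μX_comm_ιH, contractAt_μX_ιH] at hyd'
  conv_lhs => rw [← Coalgebra.sum_counit_smul (ℛ k h)]
  conv_rhs => rw [← Coalgebra.sum_counit_right_smul (ℛ k h)]
  simpa [map_sum, sum_tmul, ← smul_tmul'] using hyd'.symm

end

/-- the restricted actions `h·m = (h ⊗ ε)·m` and
`m·h = ⟨(ε ⊗ id)m₍₋₁₎, h⟩m₍₀₎` make `M` an `H`-bimodule. -/
theorem statement3 {k : Type} [Field k] {H : Type} [Ring H] [Bialgebra k H]
    [FiniteDimensional k H] {M : Type} [AddCommGroup M] [Module k M]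
    (E : YDData k H M) (hE : IsYD E) :
    IsLMod (Gdata E) ∧ IsRMod (Gdata E) ∧
      ∀ (h h' : H) (m : M),
        (Gdata E).aL (h ⊗ₜ (Gdata E).aR (m ⊗ₜ h'))
          = (Gdata E).aR ((Gdata E).aL (h ⊗ₜ m) ⊗ₜ h') :=
  ⟨isLMod_gdata hE.xmod, isRMod_gdata hE.xcom, gdata_aL_aR_comm hE.yd⟩

end YDL
end

section
/- Let $M$ be a left-left Yetter-Drinfeld module over the tensor product bialgebra $H\otimes H^*$. Define $\rho_L(m) = (\mathrm{id}\otimes\varepsilon^*)(m_{[-1]})\otimes m_{[0]}$ and $\rho_R(m) = \sum_i (1\otimes h^i)\cdot m \otimes h_i$. Then $\rho_L$ makes $M$ a left $H$-comodule, $\rho_R$ makes $M$ a right $H$-comodule, and together they make $M$ an $H$-bicomodule, i.e. $(\rho_L\otimes\mathrm{id})\rho_R = (\mathrm{id}\otimes\rho_R)\rho_L$. -/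
/- Common setup: Yetter-Drinfeld-Long bimodules over a bialgebra `H`, and
Yetter-Drinfeld modules over the tensor product bialgebra `H ⊗ H^*`. -/

open TensorProduct LinearMap Module

namespace YDL
open TensorProduct LinearMap Module

/-! The left coaction is the pushforward of the `H ⊗ H^*`-coaction along `πH = id ⊗ ε^*`, which is
a coalgebra map `H ⊗ H^* → H`. The right coaction is the one dual to the `H^*`-action
`f · m = (1 ⊗ f) · m` of the convolution algebra `H^*`. Applying `πH ⊗ id` to the Yetter-Drinfeld
condition at `x = 1 ⊗ f` kills the `H^*`-legs of `Δ(1 ⊗ f)` (because `πH` is multiplicative and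
`πH (1 ⊗ g) = g 1`), so `ρ_L` is `H^*`-linear; this is the bicomodule condition. -/

section Pushforward

variable {R A B M : Type*} [CommSemiring R] [AddCommMonoid A] [Module R A]
  [AddCommMonoid B] [Module R B] [AddCommMonoid M] [Module R M]

theorem coassoc_map_comp_of_comul_comp {ΔA : A →ₗ[R] A ⊗[R] A} {ΔB : B →ₗ[R] B ⊗[R] B}
    {π : A →ₗ[R] B} (hπ : map π π ∘ₗ ΔA = ΔB ∘ₗ π) {C : M →ₗ[R] A ⊗[R] M}
    (hC : (TensorProduct.assoc R A A M).toLinearMap ∘ₗ map ΔA LinearMap.id ∘ₗ C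
      = map LinearMap.id C ∘ₗ C) :
    (TensorProduct.assoc R B B M).toLinearMap ∘ₗ map ΔB LinearMap.id ∘ₗ
        map π LinearMap.id ∘ₗ C
      = map LinearMap.id (map π LinearMap.id ∘ₗ C) ∘ₗ map π LinearMap.id ∘ₗ C := by
  calc _ = (TensorProduct.assoc R B B M).toLinearMap ∘ₗ map (map π π) LinearMap.id ∘ₗ
        map ΔA LinearMap.id ∘ₗ C := by
        simp only [← LinearMap.comp_assoc, ← map_comp, LinearMap.id_comp, hπ]
    _ = map π (map π LinearMap.id) ∘ₗ map LinearMap.id C ∘ₗ C := by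
        rw [← hC]
        simp only [← LinearMap.comp_assoc, map_map_comp_assoc_eq]
    _ = _ := by simp only [← LinearMap.comp_assoc, ← map_comp, LinearMap.id_comp, LinearMap.comp_id]

theorem counit_map_comp_of_counit_comp {εA : A →ₗ[R] R} {εB : B →ₗ[R] R} {π : A →ₗ[R] B}
    (hπ : εB ∘ₗ π = εA) {C : M →ₗ[R] A ⊗[R] M}
    (hC : (TensorProduct.lid R M).toLinearMap ∘ₗ map εA LinearMap.id ∘ₗ C = LinearMap.id) :
    (TensorProduct.lid R M).toLinearMap ∘ₗ map εB LinearMap.id ∘ₗ map π LinearMap.id ∘ₗ C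
      = LinearMap.id := by
  conv_rhs => rw [← hC, ← hπ]
  simp only [← LinearMap.comp_assoc, ← map_comp, LinearMap.id_comp]

end Pushforward

section BasisSums

variable {R M N : Type*} [CommSemiring R] [AddCommMonoid M] [Module R M]
  [AddCommMonoid N] [Module R N] {ι κ : Type*} [Fintype ι] [Fintype κ]

theorem sum_dualDistrib_coord_smul_tmul (b : Basis ι R M) (c : Basis κ R N) (u : M ⊗[R] N) :
    ∑ i, ∑ j, dualDistrib R M N (b.coord i ⊗ₜ c.coord j) u • (b i ⊗ₜ[R] c j) = u := by
  induction u using TensorProduct.induction_on with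
  | zero => simp
  | tmul x y =>
    simp only [dualDistrib_apply, ← smul_tmul_smul, ← tmul_sum, ← sum_tmul, Basis.coord_apply,
      Basis.sum_repr]
  | add u v hu hv => simp only [map_add, add_smul, Finset.sum_add_distrib, hu, hv]

end BasisSums

section TensorDual

variable {k : Type} [Field k] {H : Type} [Ring H] [Bialgebra k H]

@[simp] theorem εD_apply (f : Dual k H) : εD k H f = f 1 := rfl

@[simp] theorem πH_tmul (h : H) (f : Dual k H) : πH k H (h ⊗ₜ f) = f 1 • h := by
  simp [πH]

@[simp] theorem ιD_apply (f : Dual k H) : ιD k H f = 1 ⊗ₜ f := rfl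

theorem convL_tmul_apply_s4 (g g' : Dual k H) (h : H) :
    convL k H (g ⊗ₜ g') h = dualDistrib k H H (g ⊗ₜ g') (Coalgebra.comul h) := by
  simp [convL, LinearMap.dualMap_apply]

theorem convL_tmul_apply_one (g g' : Dual k H) : convL k H (g ⊗ₜ g') 1 = g 1 * g' 1 := by
  rw [convL_tmul_apply_s4, Bialgebra.comul_one, Algebra.TensorProduct.one_def, dualDistrib_apply]

theorem πH_μX (x y : X k H) : πH k H (μX k H (x ⊗ₜ y)) = πH k H x * πH k H y := by
  induction x using TensorProduct.induction_on with
  | zero => simp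
  | add x x' hx hx' => simp only [add_tmul, map_add, hx, hx', add_mul]
  | tmul h f =>
    induction y using TensorProduct.induction_on with
    | zero => simp
    | add y y' hy hy' => simp only [tmul_add, map_add, hy, hy', mul_add]
    | tmul h' f' =>
      simp [μX, convL_tmul_apply_one, smul_smul, mul_comm]

theorem counit_comp_πH : (Coalgebra.counit : H →ₗ[k] k) ∘ₗ πH k H = εX k H := by
  ext h f
  simp [εX, mul_comm]

theorem sum_convL_coord_tmul {V : Type*} [AddCommGroup V] [Module k V] {ι : Type*} [Fintype ι]
    (b : Basis ι k H) (T : Dual k H →ₗ[k] V) :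
    ∑ i, ∑ j, T (convL k H (b.coord j ⊗ₜ b.coord i)) ⊗ₜ[k] (b j ⊗ₜ[k] b i)
      = ∑ l, T (b.coord l) ⊗ₜ[k] Coalgebra.comul (b l) := by
  conv_rhs =>
    enter [2, l]
    rw [← sum_dualDistrib_coord_smul_tmul b b (Coalgebra.comul (b l))]
  conv_lhs =>
    enter [2, i, 2, j]
    rw [← b.sum_dual_apply_smul_coord (convL k H (b.coord j ⊗ₜ b.coord i))]
  simp only [map_sum, map_smul, sum_tmul, tmul_sum, smul_tmul, convL_tmul_apply_s4]
  exact Finset.sum_comm.trans ((Finset.sum_congr rfl fun _ _ => Finset.sum_comm).trans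
    Finset.sum_comm)

variable {M : Type} [AddCommGroup M] [Module k M]

def dualAct (A : X k H ⊗[k] M →ₗ[k] M) : Dual k H →ₗ[k] M →ₗ[k] M :=
  TensorProduct.curry (A ∘ₗ map (ιD k H) LinearMap.id)

@[simp] theorem dualAct_apply (A : X k H ⊗[k] M →ₗ[k] M) (f : Dual k H) (m : M) :
    dualAct A f m = A ((1 ⊗ₜ f) ⊗ₜ m) := rfl

theorem dualAct_convL {E : YDData k H M} (hE : IsXMod E) (f g : Dual k H) :
    dualAct E.act (convL k H (f ⊗ₜ g)) = dualAct E.act f ∘ₗ dualAct E.act g := by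
  ext m
  simp [← hE.mul_act]

theorem dualAct_counit {E : YDData k H M} (hE : IsXMod E) :
    dualAct E.act Coalgebra.counit = LinearMap.id := by
  ext m
  exact hE.one_act m

variable [FiniteDimensional k H]

theorem dualDistrib_ΔD_tmul (f : Dual k H) (a a' : H) :
    dualDistrib k H H (ΔD k H f) (a ⊗ₜ a') = f (a * a') := by
  change dualDistribEquiv k H H ((dualDistribEquiv k H H).symm _) _ = _
  rw [LinearEquiv.apply_symm_apply]
  rfl

theorem rid_map_εD_ΔD (f : Dual k H) :
    TensorProduct.rid k (Dual k H) (map LinearMap.id (εD k H) (ΔD k H f)) = f := by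
  suffices ∀ y, TensorProduct.rid k (Dual k H) (map LinearMap.id (εD k H) y)
      = dualDistrib k H H y ∘ₗ (TensorProduct.mk k H H).flip 1 by
    ext a; simp [this, dualDistrib_ΔD_tmul]
  intro y
  induction y using TensorProduct.induction_on with
  | zero => ext; simp
  | tmul g g' => ext; simp [mul_comm]
  | add y y' hy hy' => simp only [map_add, hy, hy', LinearMap.add_comp]

theorem lid_map_εD_ΔD (f : Dual k H) :
    TensorProduct.lid k (Dual k H) (map (εD k H) LinearMap.id (ΔD k H f)) = f := by
  suffices ∀ y, TensorProduct.lid k (Dual k H) (map (εD k H) LinearMap.id y)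
      = dualDistrib k H H y ∘ₗ TensorProduct.mk k H H 1 by
    ext a; simp [this, dualDistrib_ΔD_tmul]
  intro y
  induction y using TensorProduct.induction_on with
  | zero => ext; simp
  | tmul g g' => ext; simp
  | add y y' hy hy' => simp only [map_add, hy, hy', LinearMap.add_comp]

theorem ΔX_ιD (f : Dual k H) : ΔX k H (ιD k H f) = map (ιD k H) (ιD k H) (ΔD k H f) := by
  suffices ∀ y, tensorTensorTensorComm k H H (Dual k H) (Dual k H) ((1 ⊗ₜ 1) ⊗ₜ y)
      = map (ιD k H) (ιD k H) y by
    simp [ΔX, Bialgebra.comul_one, Algebra.TensorProduct.one_def, this]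
  intro y
  induction y using TensorProduct.induction_on with
  | zero => simp
  | tmul g g' => simp
  | add y y' hy hy' => simp only [tmul_add, map_add, hy, hy']

theorem map_πH_πH_comp_ΔX :
    map (πH k H) (πH k H) ∘ₗ ΔX k H = Coalgebra.comul ∘ₗ πH k H := by
  suffices ∀ u y, map (πH k H) (πH k H)
      (tensorTensorTensorComm k H H (Dual k H) (Dual k H) (u ⊗ₜ y))
        = dualDistrib k H H y (1 ⊗ₜ 1) • u by
    ext h f
    simp [ΔX, this, dualDistrib_ΔD_tmul]
  intro u y
  induction u using TensorProduct.induction_on with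
  | zero => simp
  | add u u' hu hu' => simp only [add_tmul, map_add, hu, hu', smul_add]
  | tmul h h' =>
    induction y using TensorProduct.induction_on with
    | zero => simp
    | add y y' hy hy' => simp only [tmul_add, map_add, hy, hy', LinearMap.add_apply, add_smul]
    | tmul g g' => simp [← smul_tmul', smul_smul, mul_comm]

theorem isLCom_gdata {E : YDData k H M} (hE : IsXCom E) : IsLCom (Gdata E) :=
  ⟨coassoc_map_comp_of_comul_comp map_πH_πH_comp_ΔX hE.coassoc,
    counit_map_comp_of_counit_comp counit_comp_πH hE.counit⟩

theorem gcR_apply (A : X k H ⊗[k] M →ₗ[k] M) (m : M) :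
    gcR A m = ∑ i, dualAct A ((Basis.ofVectorSpace k H).coord i) m
      ⊗ₜ[k] Basis.ofVectorSpace k H i := by
  simp [gcR, canel, coevaluation_apply_one]

theorem isRCom_gdata {E : YDData k H M} (hE : IsXMod E) : IsRCom (Gdata E) := by
  set b := Basis.ofVectorSpace k H
  constructor
  · ext m
    change TensorProduct.assoc k M H H (map (gcR E.act) LinearMap.id (gcR E.act m))
      = map LinearMap.id Coalgebra.comul (gcR E.act m)
    calc _ = ∑ i, ∑ j, dualAct E.act (b.coord j) (dualAct E.act (b.coord i) m)
          ⊗ₜ[k] (b j ⊗ₜ[k] b i) := by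
          simp only [gcR_apply, map_sum, map_tmul, sum_tmul, LinearMap.id_apply, assoc_tmul]
          rfl
      _ = ∑ i, ∑ j, (dualAct E.act).flip m (convL k H (b.coord j ⊗ₜ b.coord i))
          ⊗ₜ[k] (b j ⊗ₜ[k] b i) := by
          simp [dualAct_convL hE]
      _ = _ := by
          rw [sum_convL_coord_tmul, gcR_apply]
          simp only [map_sum, map_tmul, LinearMap.id_apply, LinearMap.flip_apply]
          rfl
  · ext m
    change TensorProduct.rid k M (map LinearMap.id Coalgebra.counit (gcR E.act m)) = m
    rw [gcR_apply]
    simp only [map_sum, map_tmul, rid_tmul, LinearMap.id_apply]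
    conv_rhs => rw [← LinearMap.id_apply (R := k) m, ← dualAct_counit hE,
      ← b.sum_dual_apply_smul_coord Coalgebra.counit]
    simp only [map_sum, map_smul, LinearMap.sum_apply, LinearMap.smul_apply]
    rfl

theorem gcL_dualAct {E : YDData k H M} (hE : CondYD E) (f : Dual k H) (m : M) :
    gcL E.coact (dualAct E.act f m) = map LinearMap.id (dualAct E.act f) (gcL E.coact m) := by
  -- `Δ(1 ⊗ f)` is the image of `ΔD f`, which is not a pure tensor: compute both sides of the
  -- Yetter-Drinfeld condition at `(1 ⊗ f) ⊗ m` for an arbitrary `y` in place of `ΔD f`.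
  have hL : ∀ y : Dual k H ⊗[k] Dual k H, map (πH k H) LinearMap.id
      (map (μX k H ∘ₗ (TensorProduct.comm k (X k H) (X k H)).toLinearMap) LinearMap.id
        ((TensorProduct.assoc k (X k H) (X k H) M).symm
          (map LinearMap.id (E.coact ∘ₗ E.act)
            (TensorProduct.assoc k (X k H) (X k H) M
              (TensorProduct.comm k (X k H) (X k H) (map (ιD k H) (ιD k H) y) ⊗ₜ m)))))
      = gcL E.coact (dualAct E.act (TensorProduct.rid k _ (map LinearMap.id (εD k H) y)) m) := by
    intro y
    induction y using TensorProduct.induction_on with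
    | zero => simp
    | add y y' hy hy' => simp only [map_add, add_tmul, hy, hy', LinearMap.add_apply]
    | tmul g g' =>
      simp only [map_tmul, comm_tmul, assoc_tmul, LinearMap.comp_apply, rid_tmul, map_smul,
        LinearMap.smul_apply, gcL, dualAct_apply, ιD_apply, LinearMap.id_apply]
      generalize E.coact (E.act ((1 ⊗ₜ g) ⊗ₜ m)) = z
      induction z using TensorProduct.induction_on with
      | zero => simp
      | add z z' hz hz' => simp only [tmul_add, map_add, hz, hz', smul_add]
      | tmul x n => simp [πH_μX, smul_tmul']
  have hR : ∀ (y : Dual k H ⊗[k] Dual k H) (z : X k H ⊗[k] M), map (πH k H) LinearMap.id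
      (map (μX k H) E.act (tensorTensorTensorComm k (X k H) (X k H) (X k H) M
        (map (ιD k H) (ιD k H) y ⊗ₜ z)))
      = map LinearMap.id (dualAct E.act (TensorProduct.lid k _ (map (εD k H) LinearMap.id y)))
          (map (πH k H) LinearMap.id z) := by
    intro y z
    induction y using TensorProduct.induction_on with
    | zero => simp
    | add y y' hy hy' => simp only [map_add, add_tmul, hy, hy', TensorProduct.map_add_right,
        LinearMap.add_apply]
    | tmul g g' =>
      induction z using TensorProduct.induction_on with
      | zero => simp
      | add z z' hz hz' => simp only [tmul_add, map_add, hz, hz']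
      | tmul x n => simp [πH_μX, smul_tmul']
  have hyd := congr(map (πH k H) LinearMap.id ($hE (ιD k H f ⊗ₜ m)))
  simp only [LinearMap.comp_apply, LinearEquiv.coe_coe, map_tmul, ΔX_ιD, LinearMap.id_apply] at hyd
  rwa [hL, hR, rid_map_εD_ΔD, lid_map_εD_ΔD] at hyd

theorem map_id_gcR_apply (A : X k H ⊗[k] M →ₗ[k] M) (y : H ⊗[k] M) :
    map LinearMap.id (gcR A) y = ∑ i, TensorProduct.assoc k H M H
      (map LinearMap.id (dualAct A ((Basis.ofVectorSpace k H).coord i)) y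
        ⊗ₜ Basis.ofVectorSpace k H i) := by
  induction y using TensorProduct.induction_on with
  | zero => simp
  | add y y' hy hy' => simp only [map_add, add_tmul, hy, hy', Finset.sum_add_distrib]
  | tmul h n => simp only [map_tmul, gcR_apply, tmul_sum, LinearMap.id_apply, assoc_tmul]

theorem bicom_gdata {E : YDData k H M} (hE : CondYD E) :
    (TensorProduct.assoc k H M H).toLinearMap ∘ₗ map (Gdata E).cL LinearMap.id ∘ₗ (Gdata E).cR
      = map LinearMap.id (Gdata E).cR ∘ₗ (Gdata E).cL := by
  ext m
  change TensorProduct.assoc k H M H (map (gcL E.coact) LinearMap.id (gcR E.act m))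
    = map LinearMap.id (gcR E.act) (gcL E.coact m)
  simp only [gcR_apply, map_id_gcR_apply, map_sum, map_tmul, LinearMap.id_apply, gcL_dualAct hE]

end TensorDual

/-- `ρ_L(m) = (id ⊗ ε^*)(m₍₋₁₎) ⊗ m₍₀₎` makes `M` a left `H`-comodule,
`ρ_R(m) = ∑ (1 ⊗ hⁱ)·m ⊗ hᵢ` makes `M` a right `H`-comodule, and together an
`H`-bicomodule. -/
theorem statement4 {k : Type} [Field k] {H : Type} [Ring H] [Bialgebra k H]
    [FiniteDimensional k H] {M : Type} [AddCommGroup M] [Module k M]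
    (E : YDData k H M) (hE : IsYD E) :
    IsLCom (Gdata E) ∧ IsRCom (Gdata E) ∧
      (TensorProduct.assoc k H M H).toLinearMap ∘ₗ map (Gdata E).cL LinearMap.id ∘ₗ
          (Gdata E).cR
        = map LinearMap.id (Gdata E).cR ∘ₗ (Gdata E).cL :=
  ⟨isLCom_gdata hE.xcom, isRCom_gdata hE.xmod, bicom_gdata hE.yd⟩

end YDL
end
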